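/- Let p be an odd prime, G = Z_p, and let S be a (p, m, lambda, mu)-Gaussian difference set for G, and let F be the G-harmonic frame for C^m generated by S. Then either (1) p is congruent to 3 mod 4, S is a (p, m, lambda)-difference set for G (in particular lambda = mu), and F is an equiangular tight frame; or (2) p is congruent to 1 mod 4, lambda = mu, S is a (p, m, lambda)-difference set for G, and F is an equiangular tight frame; or (3) p is congruent to 1 mod 4, lambda != mu, and F is a biangular tight frame whose two frame angles are (1/m) * sqrt( (m - lambda) + (lambda - mu)*(1 +/ - sqrt(p))/2 ), each with frame angle multiplicity (p-1)/2. -/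

import Mathlib

open Finset

/-- The character `ρ_x(y) = exp(2πi x y / p)` of `G = ZMod p`. -/
noncomputable def rhoZ (p : ℕ) (x y : ZMod p) : ℂ :=
  Complex.exp (2 * (Real.pi : ℂ) * Complex.I * ((x.val : ℂ) * (y.val : ℂ) / (p : ℂ)))

/-- The vector `f_x = (1/√m) (ρ_{g_j}(x))_{j=1}^m` of the `ZMod p`-harmonic frame
generated by `S = {g_1, ..., g_m}`. -/
noncomputable def harmZ (p : ℕ) {m : ℕ} (g : Fin m → ZMod p) (x : ZMod p) :
    EuclideanSpace ℂ (Fin m) :=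
  (WithLp.equiv 2 (Fin m → ℂ)).symm fun j => ((Real.sqrt m : ℝ) : ℂ)⁻¹ * rhoZ p (g j) x

/-- The frame angle `|⟨f_x, f_y⟩|`. -/
noncomputable def angZ (p : ℕ) {m : ℕ} (g : Fin m → ZMod p) (x y : ZMod p) : ℝ :=
  ‖(inner ℂ (harmZ p g x) (harmZ p g y) : ℂ)‖

/-- The set of frame angles `Θ = { |⟨f_x, f_y⟩| : x ≠ y }` of the harmonic frame. -/
noncomputable def anglesSetZ (p : ℕ) {m : ℕ} (g : Fin m → ZMod p) : Set ℝ :=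
  {r : ℝ | ∃ x y : ZMod p, x ≠ y ∧ angZ p g x y = r}

/-- The harmonic frame is a tight frame (with the forced constant `n/m = p/m`):
`∑_x f_x ⊗ f_x^* = (p/m) I_m` as operators. -/
noncomputable def IsTightHarmZ (p : ℕ) [NeZero p] {m : ℕ} (g : Fin m → ZMod p) : Prop :=
  ∀ v : EuclideanSpace ℂ (Fin m),
    ∑ x : ZMod p, (inner ℂ (harmZ p g x) v : ℂ) • harmZ p g x = ((p : ℂ) / (m : ℂ)) • v

/-- `diffCount g x` is the number of ways to write `x = g_a - g_b` with `g_a ≠ g_b`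
distinct elements of `S = {g_1, ..., g_m}`. -/
noncomputable def diffCount {G : Type*} [AddCommGroup G] {m : ℕ} (g : Fin m → G) (x : G) : ℕ :=
  Nat.card {q : Fin m × Fin m // q.1 ≠ q.2 ∧ g q.1 - g q.2 = x}

/-- The set `R⁽²⁾_p = { z² : z ∈ (ZMod p)* }` of quadratic residues mod `p`. -/
def quadRes (p : ℕ) : Set (ZMod p) := {x | ∃ z : ZMod p, z ≠ 0 ∧ z ^ 2 = x}

/-- The set `R⁽⁴⁾_p = { z⁴ : z ∈ (ZMod p)* }` of quartic residues mod `p`. -/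
def quartRes (p : ℕ) : Set (ZMod p) := {x | ∃ z : ZMod p, z ≠ 0 ∧ z ^ 4 = x}

/-!
Write `ψ` for the standard additive character of `ZMod p`, `χ` for the quadratic character and
`G = ∑ χ(d) ψ(d)` for the quadratic Gauss sum. Since `⟨f_x, f_y⟩ = m⁻¹ ∑ⱼ ψ(gⱼ (y - x))`,
expanding the square gives `m² |⟨f_x, f_y⟩|² = m + ∑_d D(d) ψ(d (y - x))`, where `D(d)` counts
the representations `d = g_a - g_b`. For a Gaussian difference set
`2 D(d) = (λ + μ) [d ≠ 0] + (λ - μ) χ(d)`, so the character sum evaluates to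
`2 m² |⟨f_x, f_y⟩|² = 2m - λ - μ + (λ - μ) χ(y - x) G`.

If `λ = μ` all angles coincide. If `λ ≠ μ`, the identity at `(x, y) = (0, 1)` shows that `G` is
real; as `G² = χ(-1) p`, this forces `χ(-1) = 1`, i.e. `p ≡ 1 (mod 4)`, and `G = ±√p`. The
angle between `f_x` and `f_y` is then decided by `χ(y - x)`, and each of the two values of `χ` is
taken by `(p - 1)/2` elements `y - x`.
-/

open ZMod (stdAddChar)

section DiffCount

variable {G : Type*} [AddCommGroup G] {m : ℕ}

lemma sum_offDiag_eq_sum_diffCount [Fintype G] [DecidableEq G] {M : Type*} [AddCommMonoid M]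
    (g : Fin m → G) (f : G → M) :
    ∑ q ∈ (univ : Finset (Fin m)).offDiag, f (g q.1 - g q.2) = ∑ d, diffCount g d • f d := by
  rw [← Finset.sum_fiberwise_of_maps_to (g := fun q => g q.1 - g q.2) (t := univ)
    (fun _ _ => mem_univ _)]
  refine Finset.sum_congr rfl fun d _ => ?_
  rw [Finset.sum_congr rfl fun q hq => by rw [(Finset.mem_filter.mp hq).2], Finset.sum_const,
    diffCount, Nat.card_eq_fintype_card, Fintype.card_subtype]
  congr 2
  ext q
  simp

lemma diffCount_zero_of_injective {g : Fin m → G} (hg : Function.Injective g) :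
    diffCount g 0 = 0 := by
  rw [diffCount, Nat.card_eq_zero]
  exact Or.inl ⟨fun ⟨q, hne, hq⟩ => hne (hg (sub_eq_zero.mp hq))⟩

end DiffCount

section HarmonicFrame

variable {p : ℕ} [NeZero p] {m : ℕ}

lemma rhoZ_eq_stdAddChar (a x : ZMod p) : rhoZ p a x = stdAddChar (a * x) := by
  rw [rhoZ, ZMod.stdAddChar_apply, show a * x = ((a.val * x.val : ℕ) : ZMod p) by simp,
    ZMod.toCircle_natCast]
  push_cast
  ring_nf

lemma harmZ_apply (g : Fin m → ZMod p) (x : ZMod p) (j : Fin m) :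
    harmZ p g x j = ((Real.sqrt m : ℝ) : ℂ)⁻¹ * stdAddChar (g j * x) := by
  simp [harmZ, rhoZ_eq_stdAddChar]

lemma inv_sqrt_mul_inv_sqrt (m : ℕ) :
    ((Real.sqrt m : ℝ) : ℂ)⁻¹ * ((Real.sqrt m : ℝ) : ℂ)⁻¹ = (m : ℂ)⁻¹ := by
  rw [← mul_inv, ← Complex.ofReal_mul, Real.mul_self_sqrt m.cast_nonneg, Complex.ofReal_natCast]

lemma harmZ_mul_conj_harmZ (g : Fin m → ZMod p) (x y : ZMod p) (j k : Fin m) :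
    harmZ p g y k * starRingEnd ℂ (harmZ p g x j)
      = (m : ℂ)⁻¹ * stdAddChar (g k * y - g j * x) := by
  rw [harmZ_apply, harmZ_apply, (starRingEnd ℂ).map_mul, map_inv₀, Complex.conj_ofReal,
    ← AddChar.map_neg_eq_conj, mul_mul_mul_comm, inv_sqrt_mul_inv_sqrt,
    ← AddChar.map_add_eq_mul, ← sub_eq_add_neg]

lemma sum_stdAddChar_mul (b : ZMod p) :
    ∑ x : ZMod p, stdAddChar (x * b) = if b = 0 then (p : ℂ) else 0 := by
  rw [AddChar.sum_mulShift b (ZMod.isPrimitive_stdAddChar p), ZMod.card]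
  split_ifs <;> simp

theorem isTightHarmZ (g : Fin m → ZMod p) (hg : Function.Injective g) : IsTightHarmZ p g := by
  intro v
  ext j
  calc (∑ x, (inner ℂ (harmZ p g x) v : ℂ) • harmZ p g x) j
      = ∑ k, v k * ((m : ℂ)⁻¹ * ∑ x, stdAddChar (x * (g j - g k))) := by
        simp only [WithLp.ofLp_sum, Finset.sum_apply, PiLp.smul_apply, smul_eq_mul,
          PiLp.inner_apply, RCLike.inner_apply, Finset.sum_mul, Finset.mul_sum]
        rw [Finset.sum_comm]
        refine Finset.sum_congr rfl fun k _ => Finset.sum_congr rfl fun x _ => ?_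
        rw [mul_assoc, mul_comm (starRingEnd ℂ _), harmZ_mul_conj_harmZ, mul_sub, mul_comm x,
          mul_comm x]
    _ = ((p : ℂ) / m) * v j := by
        simp only [sum_stdAddChar_mul, sub_eq_zero, hg.eq_iff]
        simp [div_eq_inv_mul, mul_comm]

lemma inner_harmZ (g : Fin m → ZMod p) (x y : ZMod p) :
    (inner ℂ (harmZ p g x) (harmZ p g y) : ℂ)
      = (m : ℂ)⁻¹ * ∑ j, stdAddChar (g j * (y - x)) := by
  simp only [PiLp.inner_apply, RCLike.inner_apply, Finset.mul_sum]
  refine Finset.sum_congr rfl fun j _ => ?_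
  rw [harmZ_mul_conj_harmZ, mul_sub]

lemma sq_norm_sum_stdAddChar (g : Fin m → ZMod p) (t : ZMod p) :
    ((‖∑ j, stdAddChar (g j * t)‖ ^ 2 : ℝ) : ℂ)
      = m + ∑ d, (diffCount g d : ℂ) * stdAddChar (d * t) := by
  have hpair : ∀ q : Fin m × Fin m,
      stdAddChar (g q.1 * t) * starRingEnd ℂ (stdAddChar (g q.2 * t))
        = stdAddChar ((g q.1 - g q.2) * t) := fun q => by
    rw [← AddChar.map_neg_eq_conj, ← AddChar.map_add_eq_mul, sub_mul, sub_eq_add_neg]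
  rw [Complex.ofReal_pow, ← Complex.mul_conj', map_sum, Finset.sum_mul_sum, ← Finset.sum_product',
    Finset.sum_congr rfl fun q _ => hpair q, ← Finset.diag_union_offDiag,
    Finset.sum_union (Finset.disjoint_diag_offDiag _), Finset.sum_diag,
    sum_offDiag_eq_sum_diffCount g (fun d => stdAddChar (d * t))]
  simp

lemma sq_mul_angZ (hm : 0 < m) (g : Fin m → ZMod p) (x y : ZMod p) :
    ((((m : ℝ) * angZ p g x y) ^ 2 : ℝ) : ℂ)
      = m + ∑ d, (diffCount g d : ℂ) * stdAddChar (d * (y - x)) := by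
  have hm' : (m : ℝ) ≠ 0 := by positivity
  rw [← sq_norm_sum_stdAddChar, angZ, inner_harmZ, norm_mul, norm_inv, Complex.norm_natCast,
    mul_inv_cancel_left₀ hm']

end HarmonicFrame

section QuadraticChar

variable {F : Type*} [Field F] [Fintype F] [DecidableEq F]

lemma exists_ne_zero_quadraticChar_eq (hF : ringChar F ≠ 2) {c : ℤ} (hc : c = 1 ∨ c = -1) :
    ∃ a, a ≠ 0 ∧ quadraticChar F a = c := by
  obtain ⟨a, ha⟩ : ∃ a, quadraticChar F a = c := by
    rcases hc with rfl | rfl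
    exacts [⟨1, map_one _⟩, quadraticChar_exists_neg_one hF]
  refine ⟨a, ?_, ha⟩
  rintro rfl
  rw [quadraticChar_zero] at ha
  omega

lemma card_filter_quadraticChar_eq (hF : ringChar F ≠ 2) {c : ℤ}
    (hc : c = 1 ∨ c = -1) : #{a | quadraticChar F a = c} = (Fintype.card F - 1) / 2 := by
  obtain ⟨s, hs⟩ := quadraticChar_exists_neg_one hF
  have hs0 : s ≠ 0 := by rintro rfl; simp at hs
  have hflip : #{a | quadraticChar F a = 1} = #{a | quadraticChar F a = -1} :=
    Finset.card_equiv (Equiv.mulLeft₀ s hs0) fun a => by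
      simp only [mem_filter, mem_univ, true_and, Equiv.mulLeft₀_apply, map_mul, hs]
      omega
  have hunion :
      ({a | quadraticChar F a = 1 ∨ quadraticChar F a = -1} : Finset F) = univ.erase 0 := by
    ext a
    rcases eq_or_ne a 0 with rfl | ha
    · simp
    · simpa [ha] using quadraticChar_dichotomy ha
  have hsum :
      #{a | quadraticChar F a = 1} + #{a | quadraticChar F a = -1} = Fintype.card F - 1 := by
    rw [← card_union_of_disjoint (disjoint_filter.mpr fun a _ h => by rw [h]; decide),
      ← Finset.filter_or, hunion, Finset.card_erase_of_mem (mem_univ _), card_univ]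
  rcases hc with rfl | rfl <;> omega

end QuadraticChar

section Gauss

variable {p : ℕ} [Fact p.Prime]

lemma natCard_setOf_quadraticChar_sub_eq (hp2 : p ≠ 2) (x : ZMod p) {c : ℤ}
    (hc : c = 1 ∨ c = -1) :
    Nat.card {y : ZMod p | quadraticChar (ZMod p) (y - x) = c} = (p - 1) / 2 := by
  have h := card_filter_quadraticChar_eq (F := ZMod p) (by rwa [ZMod.ringChar_zmod_n]) hc
  rw [ZMod.card] at h
  rw [← h, ← Fintype.card_subtype, ← Nat.card_eq_fintype_card]
  exact Nat.card_congr ((Equiv.subRight x).subtypeEquiv fun _ => Iff.rfl)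

noncomputable def quadGaussSum (p : ℕ) [Fact p.Prime] : ℂ :=
  gaussSum ((quadraticChar (ZMod p)).ringHomComp (Int.castRingHom ℂ)) stdAddChar

lemma sum_quadraticChar_mul_stdAddChar {t : ZMod p} (ht : t ≠ 0) :
    ∑ d, (quadraticChar (ZMod p) d : ℂ) * stdAddChar (d * t)
      = quadraticChar (ZMod p) t * quadGaussSum p := by
  have h := gaussSum_mulShift_eq ((quadraticChar (ZMod p)).ringHomComp (Int.castRingHom ℂ))
    stdAddChar (Units.mk0 t ht)
  rw [((quadraticChar_isQuadratic _).comp _).inv] at h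
  simp only [gaussSum, AddChar.mulShift_apply, MulChar.ringHomComp_apply, Units.val_mk0,
    eq_intCast, mul_comm t] at h
  simpa only [quadGaussSum, gaussSum, MulChar.ringHomComp_apply, eq_intCast] using h

lemma quadGaussSum_sq (hp2 : p ≠ 2) :
    quadGaussSum p ^ 2 = quadraticChar (ZMod p) (-1) * p := by
  rw [quadGaussSum, gaussSum_sq ((MulChar.ringHomComp_ne_one_iff Int.cast_injective).mpr
      (quadraticChar_ne_one (by rwa [ZMod.ringChar_zmod_n])))
    ((quadraticChar_isQuadratic _).comp _) (ZMod.isPrimitive_stdAddChar p), ZMod.card]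
  rfl

lemma mod_four_eq_one_and_exists_sign_of_quadGaussSum_eq_ofReal (hp2 : p ≠ 2) {r : ℝ}
    (hr : quadGaussSum p = r) :
    p % 4 = 1 ∧ ∃ σ : ℤ, (σ = 1 ∨ σ = -1) ∧ quadGaussSum p = σ * Real.sqrt p := by
  have hsq : r ^ 2 = (quadraticChar (ZMod p) (-1) : ℝ) * p := by
    exact_mod_cast hr ▸ quadGaussSum_sq hp2
  have hχ : quadraticChar (ZMod p) (-1) = 1 := by
    rcases quadraticChar_dichotomy (neg_ne_zero.2 (one_ne_zero (α := ZMod p))) with h | h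
    · exact h
    · have : (0 : ℝ) < p := by exact_mod_cast (Fact.out : p.Prime).pos
      rw [h] at hsq
      push_cast at hsq
      nlinarith [sq_nonneg r]
  constructor
  · have h := (quadraticChar_one_iff_isSquare (neg_ne_zero.2 one_ne_zero)).1 hχ
    rw [ZMod.exists_sq_eq_neg_one_iff] at h
    have := Nat.odd_mod_four_iff.1 (Nat.odd_iff.1 ((Fact.out : p.Prime).odd_of_ne_two hp2))
    omega
  · rw [hχ, Int.cast_one, one_mul, ← Real.sq_sqrt (Nat.cast_nonneg p)] at hsq
    rcases sq_eq_sq_iff_eq_or_eq_neg.1 hsq with h | h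
    · exact ⟨1, Or.inl rfl, by rw [hr, h]; simp⟩
    · exact ⟨-1, Or.inr rfl, by rw [hr, h]; simp⟩

end Gauss

lemma eq_one_div_mul_sqrt_of_sq_mul_eq {c a v : ℝ} (hc : 0 < c) (ha : 0 ≤ a)
    (h : (c * a) ^ 2 = v) : a = 1 / c * Real.sqrt v := by
  rw [← h, Real.sqrt_sq (by positivity)]
  field_simp

section GaussianDiffSet

variable {p : ℕ} [Fact p.Prime] {m : ℕ}

def IsGaussianDiffSet (g : Fin m → ZMod p) (lam mu : ℕ) : Prop :=
  (∀ x ∈ insert (0 : ZMod p) (quadRes p), x ≠ 0 → diffCount g x = lam) ∧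
    ∀ x : ZMod p, x ∉ insert (0 : ZMod p) (quadRes p) → diffCount g x = mu

lemma mem_quadRes_iff_quadraticChar_eq_one {d : ZMod p} (hd : d ≠ 0) :
    d ∈ quadRes p ↔ quadraticChar (ZMod p) d = 1 := by
  rw [quadraticChar_one_iff_isSquare hd]
  constructor
  · rintro ⟨z, -, rfl⟩
    exact ⟨z, sq z⟩
  · rintro ⟨z, rfl⟩
    exact ⟨z, by rintro rfl; simp at hd, sq z⟩

namespace IsGaussianDiffSet

variable {g : Fin m → ZMod p} {lam mu : ℕ}

lemma two_mul_diffCount (hS : IsGaussianDiffSet g lam mu) (hg : Function.Injective g)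
    (d : ZMod p) :
    (2 * diffCount g d : ℂ)
      = (lam + mu) * (1 - if d = 0 then 1 else 0) + (lam - mu) * quadraticChar (ZMod p) d := by
  rcases eq_or_ne d 0 with rfl | hd
  · simp [diffCount_zero_of_injective hg]
  rcases quadraticChar_dichotomy hd with h | h
  · have hres := (mem_quadRes_iff_quadraticChar_eq_one hd).2 h
    rw [hS.1 d (Set.mem_insert_of_mem _ hres) hd, h]
    simp [hd]
    ring
  · have hres : d ∉ insert 0 (quadRes p) := by
      simp [hd, mem_quadRes_iff_quadraticChar_eq_one hd, h]
    rw [hS.2 d hres, h]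
    simp [hd]
    ring

lemma two_mul_sum_diffCount_mul_stdAddChar (hS : IsGaussianDiffSet g lam mu)
    (hg : Function.Injective g) {t : ZMod p} (ht : t ≠ 0) :
    2 * ∑ d, (diffCount g d : ℂ) * stdAddChar (d * t)
      = -(lam + mu) + (lam - mu) * quadraticChar (ZMod p) t * quadGaussSum p := by
  have hpunctured : ∑ d : ZMod p, (1 - if d = 0 then 1 else 0) * stdAddChar (d * t) = -1 := by
    simp [sub_mul, Finset.sum_sub_distrib, sum_stdAddChar_mul, ht]
  simp_rw [Finset.mul_sum, ← mul_assoc, hS.two_mul_diffCount hg, add_mul, Finset.sum_add_distrib,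
    mul_assoc, ← Finset.mul_sum, hpunctured, sum_quadraticChar_mul_stdAddChar ht]
  ring

lemma two_mul_sq_mul_angZ (hS : IsGaussianDiffSet g lam mu) (hg : Function.Injective g)
    (hm : 0 < m) {x y : ZMod p} (hxy : x ≠ y) :
    2 * ((((m : ℝ) * angZ p g x y) ^ 2 : ℝ) : ℂ)
      = 2 * m - (lam + mu) + (lam - mu) * quadraticChar (ZMod p) (y - x) * quadGaussSum p := by
  rw [sq_mul_angZ hm, mul_add, hS.two_mul_sum_diffCount_mul_stdAddChar hg (sub_ne_zero.2 hxy.symm)]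
  ring

lemma angZ_eq_of_lam_eq_mu (hS : IsGaussianDiffSet g lam lam) (hg : Function.Injective g)
    (hm : 0 < m) {x y : ZMod p} (hxy : x ≠ y) :
    angZ p g x y = 1 / (m : ℝ) * Real.sqrt ((m : ℝ) - lam) := by
  refine eq_one_div_mul_sqrt_of_sq_mul_eq (by positivity) (norm_nonneg _) ?_
  have h := hS.two_mul_sq_mul_angZ hg hm hxy
  apply Complex.ofReal_injective
  push_cast at h ⊢
  linear_combination h / 2

lemma exists_quadGaussSum_eq_ofReal (hS : IsGaussianDiffSet g lam mu)
    (hg : Function.Injective g) (hm : 0 < m) (hlm : lam ≠ mu) :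
    ∃ r : ℝ, quadGaussSum p = r := by
  have h := hS.two_mul_sq_mul_angZ hg hm (zero_ne_one (α := ZMod p))
  rw [sub_zero, map_one, Int.cast_one, mul_one] at h
  have hlm' : (lam : ℂ) - mu ≠ 0 := sub_ne_zero.2 (by exact_mod_cast hlm)
  refine ⟨(2 * ((m : ℝ) * angZ p g 0 1) ^ 2 - 2 * m + lam + mu) / (lam - mu), ?_⟩
  push_cast at h ⊢
  rw [eq_div_iff hlm']
  linear_combination -h

lemma sq_mul_angZ_eq_ite (hS : IsGaussianDiffSet g lam mu) (hg : Function.Injective g)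
    (hm : 0 < m) {σ : ℤ} (hσ : σ = 1 ∨ σ = -1) (hG : quadGaussSum p = σ * Real.sqrt p)
    {x y : ZMod p} (hxy : x ≠ y) :
    ((m : ℝ) * angZ p g x y) ^ 2 =
      if quadraticChar (ZMod p) (y - x) = σ
      then ((m : ℝ) - lam) + ((lam : ℝ) - mu) * (1 + Real.sqrt p) / 2
      else ((m : ℝ) - lam) + ((lam : ℝ) - mu) * (1 - Real.sqrt p) / 2 := by
  have h := hS.two_mul_sq_mul_angZ hg hm hxy
  rw [hG] at h
  apply Complex.ofReal_injective
  rcases hσ with rfl | rfl <;>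
    rcases quadraticChar_dichotomy (sub_ne_zero.2 hxy.symm) with hc | hc <;>
    simp only [hc] at h ⊢ <;> norm_num at h ⊢ <;> linear_combination h / 2

end IsGaussianDiffSet

end GaussianDiffSet

section FrameAngles

variable {p : ℕ} [Fact p.Prime] {m : ℕ} {g : Fin m → ZMod p}

lemma anglesSetZ_eq_singleton {A : ℝ} (h : ∀ x y : ZMod p, x ≠ y → angZ p g x y = A) :
    anglesSetZ p g = {A} := by
  ext r
  constructor
  · rintro ⟨x, y, hxy, rfl⟩
    exact h x y hxy
  · rintro rfl
    exact ⟨0, 1, zero_ne_one, h 0 1 zero_ne_one⟩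

variable {σ : ℤ} {A B : ℝ}

lemma anglesSetZ_eq_pair (hp2 : p ≠ 2) (hσ : σ = 1 ∨ σ = -1) (hang : ∀ x y : ZMod p, x ≠ y →
      angZ p g x y = if quadraticChar (ZMod p) (y - x) = σ then A else B) :
    anglesSetZ p g = {A, B} := by
  have hF : ringChar (ZMod p) ≠ 2 := by rwa [ZMod.ringChar_zmod_n]
  obtain ⟨u, hu0, hu⟩ := exists_ne_zero_quadraticChar_eq hF hσ
  obtain ⟨w, hw0, hw⟩ := exists_ne_zero_quadraticChar_eq hF (c := -σ) (by omega)
  ext r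
  constructor
  · rintro ⟨x, y, hxy, rfl⟩
    rw [hang x y hxy]
    split_ifs <;> simp
  · rintro (rfl | rfl)
    · exact ⟨0, u, hu0.symm, by rw [hang 0 u hu0.symm, sub_zero, if_pos hu]⟩
    · exact ⟨0, w, hw0.symm, by rw [hang 0 w hw0.symm, sub_zero, if_neg (by omega)]⟩

lemma setOf_angZ_eq_left (hσ : σ = 1 ∨ σ = -1) (hAB : A ≠ B) (hang : ∀ x y : ZMod p, x ≠ y →
      angZ p g x y = if quadraticChar (ZMod p) (y - x) = σ then A else B) (x : ZMod p) :
    {y : ZMod p | y ≠ x ∧ angZ p g x y = A} = {y | quadraticChar (ZMod p) (y - x) = σ} := by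
  ext y
  simp only [Set.mem_ofPred_eq]
  constructor
  · rintro ⟨hyx, hA⟩
    rw [hang x y hyx.symm] at hA
    by_contra hc
    rw [if_neg hc] at hA
    exact hAB hA.symm
  · intro hc
    have hyx : y ≠ x := by rintro rfl; rw [sub_self, quadraticChar_zero] at hc; omega
    exact ⟨hyx, by rw [hang x y hyx.symm, if_pos hc]⟩

lemma setOf_angZ_eq_right (hσ : σ = 1 ∨ σ = -1) (hAB : A ≠ B) (hang : ∀ x y : ZMod p, x ≠ y →
      angZ p g x y = if quadraticChar (ZMod p) (y - x) = σ then A else B) (x : ZMod p) :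
    {y : ZMod p | y ≠ x ∧ angZ p g x y = B} = {y | quadraticChar (ZMod p) (y - x) = -σ} := by
  ext y
  simp only [Set.mem_ofPred_eq]
  constructor
  · rintro ⟨hyx, hB⟩
    rw [hang x y hyx.symm] at hB
    split_ifs at hB with hc
    · exact absurd hB hAB
    · rcases quadraticChar_dichotomy (sub_ne_zero.2 hyx) with h | h <;> omega
  · intro hc
    have hyx : y ≠ x := by rintro rfl; rw [sub_self, quadraticChar_zero] at hc; omega
    exact ⟨hyx, by rw [hang x y hyx.symm, if_neg (by omega)]⟩

lemma biangular_of_sq_mul_angZ_eq_ite (hp2 : p ≠ 2) (hm : 0 < m) (hσ : σ = 1 ∨ σ = -1)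
    {v w : ℝ} (hvw : v ≠ w) (h : ∀ x y : ZMod p, x ≠ y →
      ((m : ℝ) * angZ p g x y) ^ 2 = if quadraticChar (ZMod p) (y - x) = σ then v else w) :
    anglesSetZ p g = {1 / (m : ℝ) * Real.sqrt v, 1 / (m : ℝ) * Real.sqrt w} ∧
      (anglesSetZ p g).ncard = 2 ∧
      ∀ x : ZMod p,
        Nat.card {y : ZMod p | y ≠ x ∧ angZ p g x y = 1 / (m : ℝ) * Real.sqrt v} = (p - 1) / 2 ∧
        Nat.card {y : ZMod p | y ≠ x ∧ angZ p g x y = 1 / (m : ℝ) * Real.sqrt w} = (p - 1) / 2 := by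
  have hF : ringChar (ZMod p) ≠ 2 := by rwa [ZMod.ringChar_zmod_n]
  obtain ⟨u, hu0, hu⟩ := exists_ne_zero_quadraticChar_eq hF hσ
  obtain ⟨u', hu0', hu'⟩ := exists_ne_zero_quadraticChar_eq hF (c := -σ) (by omega)
  have hv : 0 ≤ v := by
    have := h 0 u hu0.symm
    rw [sub_zero, if_pos hu] at this
    exact this ▸ sq_nonneg _
  have hw : 0 ≤ w := by
    have := h 0 u' hu0'.symm
    rw [sub_zero, if_neg (by omega)] at this
    exact this ▸ sq_nonneg _
  have hAB : 1 / (m : ℝ) * Real.sqrt v ≠ 1 / (m : ℝ) * Real.sqrt w := fun hAB =>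
    hvw ((Real.sqrt_inj hv hw).1 (mul_left_cancel₀ (by positivity) hAB))
  have hang : ∀ x y : ZMod p, x ≠ y → angZ p g x y =
      if quadraticChar (ZMod p) (y - x) = σ
      then 1 / (m : ℝ) * Real.sqrt v else 1 / (m : ℝ) * Real.sqrt w := by
    intro x y hxy
    have := h x y hxy
    split_ifs at this ⊢ <;>
      exact eq_one_div_mul_sqrt_of_sq_mul_eq (by positivity) (norm_nonneg _) this
  have hset := anglesSetZ_eq_pair hp2 hσ hang
  refine ⟨hset, hset ▸ Set.ncard_pair hAB, fun x => ⟨?_, ?_⟩⟩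
  · rw [setOf_angZ_eq_left hσ hAB hang, natCard_setOf_quadraticChar_sub_eq hp2 x hσ]
  · rw [setOf_angZ_eq_right hσ hAB hang, natCard_setOf_quadraticChar_sub_eq hp2 x (by omega)]

end FrameAngles

/-- Let `p` be an odd prime, `G = ZMod p`, `S` a `(p, m, λ, μ)`-Gaussian
difference set for `G` (a bidifference set relative to `R⁽²⁾_p ∪ {0}`), and `F` the
`G`-harmonic frame for `ℂ^m` generated by `S`.  Then either (1) `p ≡ 3 (mod 4)`, `S` is a
`(p, m, λ)`-difference set (in particular `λ = μ`), and `F` is an equiangular tight frame;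
or (2) `p ≡ 1 (mod 4)`, `λ = μ`, `S` is a `(p, m, λ)`-difference set, and `F` is an
equiangular tight frame; or (3) `p ≡ 1 (mod 4)`, `λ ≠ μ`, and `F` is a biangular tight
frame with the two frame angles `(1/m)√((m-λ) + (λ-μ)(1 ± √p)/2)`, each with frame angle
multiplicity `(p-1)/2`. -/
theorem statement15 (p : ℕ) [NeZero p] (hp : p.Prime) (hodd : Odd p)
    {m : ℕ} (hm : 0 < m) (g : Fin m → ZMod p) (hg : Function.Injective g) (lam mu : ℕ)
    (hlam : ∀ x ∈ insert (0 : ZMod p) (quadRes p), x ≠ 0 → diffCount g x = lam)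
    (hmu : ∀ x : ZMod p, x ∉ insert (0 : ZMod p) (quadRes p) → diffCount g x = mu) :
    (p % 4 = 3 ∧ lam = mu ∧ (∀ x : ZMod p, x ≠ 0 → diffCount g x = lam) ∧
      IsTightHarmZ p g ∧ (anglesSetZ p g).ncard = 1) ∨
    (p % 4 = 1 ∧ lam = mu ∧ (∀ x : ZMod p, x ≠ 0 → diffCount g x = lam) ∧
      IsTightHarmZ p g ∧ (anglesSetZ p g).ncard = 1) ∨
    (p % 4 = 1 ∧ lam ≠ mu ∧ IsTightHarmZ p g ∧ (anglesSetZ p g).ncard = 2 ∧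
      anglesSetZ p g =
        {(1 / (m : ℝ)) *
            Real.sqrt (((m : ℝ) - lam) + ((lam : ℝ) - mu) * (1 + Real.sqrt p) / 2),
         (1 / (m : ℝ)) *
            Real.sqrt (((m : ℝ) - lam) + ((lam : ℝ) - mu) * (1 - Real.sqrt p) / 2)} ∧
      (∀ x : ZMod p,
        Nat.card {y : ZMod p | y ≠ x ∧
            angZ p g x y = (1 / (m : ℝ)) *
              Real.sqrt (((m : ℝ) - lam) + ((lam : ℝ) - mu) * (1 + Real.sqrt p) / 2)} =
          (p - 1) / 2) ∧
      (∀ x : ZMod p,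
        Nat.card {y : ZMod p | y ≠ x ∧
            angZ p g x y = (1 / (m : ℝ)) *
              Real.sqrt (((m : ℝ) - lam) + ((lam : ℝ) - mu) * (1 - Real.sqrt p) / 2)} =
          (p - 1) / 2)) := by
  have : Fact p.Prime := ⟨hp⟩
  have hp2 : p ≠ 2 := by rintro rfl; exact absurd hodd (by decide)
  have hS : IsGaussianDiffSet g lam mu := ⟨hlam, hmu⟩
  have htight := isTightHarmZ g hg
  rcases eq_or_ne lam mu with rfl | hlm
  · have hdiff : ∀ x : ZMod p, x ≠ 0 → diffCount g x = lam := fun x hx => by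
      by_cases h : x ∈ insert (0 : ZMod p) (quadRes p)
      exacts [hlam x h hx, hmu x h]
    have hcard : (anglesSetZ p g).ncard = 1 := by
      rw [anglesSetZ_eq_singleton fun x y => hS.angZ_eq_of_lam_eq_mu hg hm, Set.ncard_singleton]
    rcases Nat.odd_mod_four_iff.1 (Nat.odd_iff.1 hodd) with h4 | h4
    · exact Or.inr (Or.inl ⟨h4, rfl, hdiff, htight, hcard⟩)
    · exact Or.inl ⟨h4, rfl, hdiff, htight, hcard⟩
  · obtain ⟨r, hr⟩ := hS.exists_quadGaussSum_eq_ofReal hg hm hlm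
    obtain ⟨h4, σ, hσ, hG⟩ := mod_four_eq_one_and_exists_sign_of_quadGaussSum_eq_ofReal hp2 hr
    have hvw : ((m : ℝ) - lam) + ((lam : ℝ) - mu) * (1 + Real.sqrt p) / 2 ≠
        ((m : ℝ) - lam) + ((lam : ℝ) - mu) * (1 - Real.sqrt p) / 2 := by
      intro h
      have hsqrt : Real.sqrt p ≠ 0 := (Real.sqrt_pos.2 (by exact_mod_cast hp.pos)).ne'
      have hprod : ((lam : ℝ) - mu) * Real.sqrt p = 0 := by linarith
      exact hlm (by exact_mod_cast sub_eq_zero.1 ((mul_eq_zero.1 hprod).resolve_right hsqrt))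
    obtain ⟨hset, hcard, hmult⟩ := biangular_of_sq_mul_angZ_eq_ite hp2 hm hσ hvw
      fun x y hxy => hS.sq_mul_angZ_eq_ite hg hm hσ hG hxy
    exact Or.inr (Or.inr ⟨h4, hlm, htight, hcard, hset, fun x => (hmult x).1, fun x => (hmult x).2⟩)
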